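/- arXiv:2310.15972 — 2 statements merged into one kernel-verified Lean document; each statement's English description precedes it below -/
import Mathlib

section
/- Let M = (F, H, t, ψ) be an MSP with H ∈ F^{n×d} whose row i is assigned to participant P_i (ψ is a bijection), realizing an access structure Γ over P = {P₁,...,P_n}, with target vector t = (1,0,...,0)ᵀ. Suppose Q = {P_n} is unauthorized and k ∈ {2,...,d} is an index with h_{nk} ≠ 0. Define h'_i = h_i − (h_{ik}/h_{nk})·h_n for i ∈ [n−1], and let M' be the MSP with matrix H' = (h'₁,...,h'_{n−1})ᵀ, the same target vector t, and ψ'(i) = P_i. Then for every A ⊆ P \ Q: the target vector t lies in the span of {h'_i : P_i ∈ A} if and only if A ∪ Q ∈ Γ. In other words, M' realizes the contraction Γ_Q. -/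
/-- Theorem 1: One-participant contraction. With `h'_i = h_i −
(h_{ik}/h_{nk})·h_n`, the MSP `M' = (F, H', t, ψ')` realizes the contraction
`Γ_Q` for `Q = {P_n}`: for every `A ⊆ P \ Q`, the target vector lies in the span
of `{h'_i : P_i ∈ A}` iff `A ∪ Q ∈ Γ`. -/
theorem stmt4 {F : Type*} [Field F] (n d : ℕ)
    (H : Fin (n + 1) → Fin (d + 1) → F)
    (Γ : Set (Set (Fin (n + 1))))
    (hmono : ∀ A B : Set (Fin (n + 1)), A ∈ Γ → A ⊆ B → B ∈ Γ)
    (hrealize : ∀ A : Set (Fin (n + 1)),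
      A ∈ Γ ↔ (Pi.single 0 1 : Fin (d + 1) → F) ∈ Submodule.span F (H '' A))
    (hQ : ({Fin.last n} : Set (Fin (n + 1))) ∉ Γ)
    (k : Fin (d + 1)) (hk0 : k ≠ 0) (hk : H (Fin.last n) k ≠ 0)
    (H' : Fin (n + 1) → Fin (d + 1) → F)
    (hH' : ∀ i, H' i = H i - (H i k / H (Fin.last n) k) • H (Fin.last n)) :
    ∀ A : Set (Fin (n + 1)), A ⊆ ({Fin.last n} : Set (Fin (n + 1)))ᶜ →
      ((Pi.single 0 1 : Fin (d + 1) → F) ∈ Submodule.span F (H' '' A) ↔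
        A ∪ {Fin.last n} ∈ Γ) := by
  intro A hA
  rw [hrealize]
  have hk' : ∀ i, H' i k = 0 := by
    intro i
    rw [hH']
    simp [div_mul_cancel₀ _ hk]
  have htk : (Pi.single 0 1 : Fin (d + 1) → F) k = 0 := Pi.single_eq_of_ne hk0 1
  constructor
  · -- forward
    intro ht
    have hle : Submodule.span F (H' '' A) ≤
        Submodule.span F (H '' (A ∪ {Fin.last n})) := by
      rw [Submodule.span_le]
      rintro x ⟨i, hi, rfl⟩
      rw [hH']
      exact sub_mem (Submodule.subset_span ⟨i, Or.inl hi, rfl⟩)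
        (Submodule.smul_mem _ _ (Submodule.subset_span ⟨Fin.last n, Or.inr rfl, rfl⟩))
    exact hle ht
  · -- backward
    intro ht
    have hle : Submodule.span F (H '' (A ∪ {Fin.last n})) ≤
        Submodule.span F (H' '' A) ⊔ (F ∙ H (Fin.last n)) := by
      rw [Submodule.span_le]
      rintro x ⟨i, hi | hi, rfl⟩
      · have : H i = H' i + (H i k / H (Fin.last n) k) • H (Fin.last n) := by
          rw [hH']; ring_nf
        rw [this]
        exact Submodule.add_mem _
          (Submodule.mem_sup_left (Submodule.subset_span ⟨i, hi, rfl⟩))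
          (Submodule.mem_sup_right (Submodule.smul_mem _ _ (Submodule.mem_span_singleton_self _)))
      · rw [Set.mem_singleton_iff] at hi
        subst hi
        exact Submodule.mem_sup_right (Submodule.mem_span_singleton_self _)
    obtain ⟨v, hv, w, hw, hvw⟩ := Submodule.mem_sup.mp (hle ht)
    obtain ⟨c, rfl⟩ := Submodule.mem_span_singleton.mp hw
    have hvk : v k = 0 := by
      have : Submodule.span F (H' '' A) ≤ LinearMap.ker (LinearMap.proj k :
          (Fin (d + 1) → F) →ₗ[F] F) := by
        rw [Submodule.span_le]
        rintro x ⟨i, hi, rfl⟩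
        exact hk' i
      exact this hv
    have hck : c * H (Fin.last n) k = 0 := by
      have := congrFun hvw k
      simpa [hvk, htk] using this.symm
    have hc : c = 0 := by
      rcases mul_eq_zero.mp hck with h | h
      · exact h
      · exact absurd h hk
    rw [hc, zero_smul, add_zero] at hvw
    rw [← hvw]
    exact hv
end

section
/- Let M = (F, H, t, ψ) be an MSP with H ∈ F^{n×d} whose row i is assigned to P_i (ψ bijective), realizing an access structure Γ over P = {P₁,...,P_n}, with t = (1,0,...,0)ᵀ. Let Q = {P_{n−m+1},...,P_n} be unauthorized, let r = rank of the submatrix formed by rows n−m+1,...,n, and suppose W = {w₁,...,w_r} ⊆ {n−m+1,...,n} and K = {k₁,...,k_r} ⊆ {2,...,d} are such that the r×r matrix U = ((h_{w₁})_K,...,(h_{w_r})_K)ᵀ is invertible. For i ∈ [n−m] let h'_iᵀ = h_iᵀ − (h_iᵀ)_K · U⁻¹ · (h_{w₁},...,h_{w_r})ᵀ. Then for every A ⊆ P \ Q: t is in the span of {h'_i : P_i ∈ A} if and only if A ∪ Q ∈ Γ; i.e., the MSP M' = (F, (h'₁,...,h'_{n−m})ᵀ, t, ψ') realizes Γ_Q.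 -/
open scoped Classical
open Matrix

/-- Theorem 2: Multi-participant contraction. With
`h'_iᵀ = h_iᵀ − (h_iᵀ)_K · U⁻¹ · (h_{w₁},…,h_{w_r})ᵀ`, the MSP `M'` realizes
the contraction `Γ_Q`: for every `A ⊆ P \ Q`, the target lies in the span of
`{h'_i : P_i ∈ A}` iff `A ∪ Q ∈ Γ`. -/
theorem stmt5 {F : Type*} [Field F] (n d r : ℕ)
    (H : Fin n → Fin (d + 1) → F)
    (Γ : Set (Set (Fin n)))
    (hmono : ∀ A B : Set (Fin n), A ∈ Γ → A ⊆ B → B ∈ Γ)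
    (hrealize : ∀ A : Set (Fin n),
      A ∈ Γ ↔ (Pi.single 0 1 : Fin (d + 1) → F) ∈ Submodule.span F (H '' A))
    (Q : Set (Fin n)) (hQ : Q ∉ Γ)
    (hrank : Matrix.rank
      (Matrix.of fun (i : {i : Fin n // i ∈ Q}) (j : Fin (d + 1)) => H i.1 j) = r)
    (w : Fin r → Fin n) (hw : Function.Injective w) (hwQ : ∀ a, w a ∈ Q)
    (K : Fin r → Fin (d + 1)) (hK : Function.Injective K) (hK0 : ∀ b, K b ≠ 0)
    (U : Matrix (Fin r) (Fin r) F) (hU : U = Matrix.of fun a b => H (w a) (K b))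
    (hUinv : IsUnit U.det)
    (H' : Fin n → Fin (d + 1) → F)
    (hH' : ∀ i j, H' i j =
      H i j - ∑ b, (Matrix.vecMul (fun a => H i (K a)) U⁻¹) b * H (w b) j) :
    ∀ A : Set (Fin n), A ⊆ Qᶜ →
      ((Pi.single 0 1 : Fin (d + 1) → F) ∈ Submodule.span F (H' '' A) ↔
        A ∪ Q ∈ Γ) := by
  classical
  -- the rows indexed by `w`
  set v : Fin r → Fin (d + 1) → F := fun b => H (w b) with hv
  set W : Submodule F (Fin (d + 1) → F) := Submodule.span F (Set.range v) with hW
  set S : Submodule F (Fin (d + 1) → F) := Submodule.span F (H '' Q) with hS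
  have hUU : U * U⁻¹ = 1 := Matrix.mul_nonsing_inv U hUinv
  have hUU' : U⁻¹ * U = 1 := Matrix.nonsing_inv_mul U hUinv
  -- linear independence of the `w`-rows
  have hvind : LinearIndependent F v := by
    rw [Fintype.linearIndependent_iff]
    intro g hg a0
    have hcoord : ∀ a, (Matrix.vecMul g U) a = 0 := by
      intro a
      have := congrFun hg (K a)
      simpa [Matrix.vecMul, dotProduct, hU, hv, Finset.sum_apply,
        mul_comm] using this
    have h4 : Matrix.vecMul g U = 0 := funext hcoord
    have h5 : Matrix.vecMul (Matrix.vecMul g U) U⁻¹ = 0 := by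
      rw [h4]; simp [Matrix.vecMul]
    rw [Matrix.vecMul_vecMul, hUU, Matrix.vecMul_one] at h5
    exact congrFun h5 a0
  -- `W = S`
  have hWS : W = S := by
    have hle : W ≤ S := by
      rw [hW, hS]
      apply Submodule.span_le.2
      rintro _ ⟨b, rfl⟩
      exact Submodule.subset_span ⟨w b, hwQ b, rfl⟩
    have hSrange : H '' Q = Set.range (fun i : {i : Fin n // i ∈ Q} => H i.1) := by
      ext x; constructor
      · rintro ⟨i, hi, rfl⟩; exact ⟨⟨i, hi⟩, rfl⟩
      · rintro ⟨i, rfl⟩; exact ⟨i.1, i.2, rfl⟩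
    have hfinS : Module.finrank F S = r := by
      rw [hS, hSrange]
      have := Matrix.rank_eq_finrank_span_row
        (Matrix.of fun (i : {i : Fin n // i ∈ Q}) (j : Fin (d + 1)) => H i.1 j)
      rw [hrank] at this
      exact this.symm
    have hfinW : Module.finrank F W = r := by
      rw [hW, finrank_span_eq_card hvind, Fintype.card_fin]
    have : FiniteDimensional F S := by
      rw [hS]
      exact FiniteDimensional.span_of_finite F ((Set.toFinite Q).image H)
    exact Submodule.eq_of_le_of_finrank_le hle (by rw [hfinS, hfinW])
  -- coordinates at `K` vanish for `H'` rows and for the target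
  have hH'K : ∀ i a, H' i (K a) = 0 := by
    intro i a
    have h1 : Matrix.vecMul (Matrix.vecMul (fun a => H i (K a)) U⁻¹) U
        = fun a => H i (K a) := by
      rw [Matrix.vecMul_vecMul, hUU', Matrix.vecMul_one]
    have h2 := congrFun h1 a
    rw [hH' i (K a), sub_eq_zero]
    simp only [Matrix.vecMul, dotProduct, hU, Matrix.of_apply] at h2 ⊢
    exact h2.symm
  have htK : ∀ a, (Pi.single 0 1 : Fin (d + 1) → F) (K a) = 0 := fun a =>
    Pi.single_eq_of_ne (hK0 a) 1
  intro A hA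
  -- decomposition `H i = H' i + combination of w-rows`
  have hdecomp : ∀ i, H i = H' i + ∑ b,
      (Matrix.vecMul (fun a => H i (K a)) U⁻¹) b • v b := by
    intro i
    funext j
    simp only [Pi.add_apply, Finset.sum_apply, Pi.smul_apply, smul_eq_mul, hH' i j, hv]
    ring
  constructor
  · -- forward: span H' A ≤ span H (A ∪ Q)
    intro ht
    rw [hrealize]
    have hle : Submodule.span F (H' '' A) ≤ Submodule.span F (H '' (A ∪ Q)) := by
      apply Submodule.span_le.2
      rintro _ ⟨i, hi, rfl⟩
      have h1 : H i ∈ Submodule.span F (H '' (A ∪ Q)) :=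
        Submodule.subset_span ⟨i, Or.inl hi, rfl⟩
      have h2 : ∀ b, v b ∈ Submodule.span F (H '' (A ∪ Q)) := fun b =>
        Submodule.subset_span ⟨w b, Or.inr (hwQ b), rfl⟩
      have heq : H' i = H i - ∑ b,
          (Matrix.vecMul (fun a => H i (K a)) U⁻¹) b • v b :=
        eq_sub_of_add_eq (hdecomp i).symm
      rw [heq]
      exact Submodule.sub_mem _ h1 (Submodule.sum_mem _ fun b _ =>
        Submodule.smul_mem _ _ (h2 b))
    exact hle ht
  · -- backward
    intro hAQ
    have ht : (Pi.single 0 1 : Fin (d + 1) → F) ∈ Submodule.span F (H '' (A ∪ Q)) :=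
      (hrealize _).1 hAQ
    have hsplit : Submodule.span F (H '' (A ∪ Q)) =
        Submodule.span F (H '' A) ⊔ W := by
      rw [Set.image_union, Submodule.span_union, hWS, hS]
    rw [hsplit] at ht
    have hle2 : Submodule.span F (H '' A) ⊔ W ≤ Submodule.span F (H' '' A) ⊔ W := by
      apply sup_le _ le_sup_right
      apply Submodule.span_le.2
      rintro _ ⟨i, hi, rfl⟩
      rw [hdecomp i]
      exact Submodule.add_mem _
        (Submodule.mem_sup_left (Submodule.subset_span ⟨i, hi, rfl⟩))
        (Submodule.mem_sup_right (Submodule.sum_mem _ fun b _ =>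
          Submodule.smul_mem _ _ (Submodule.subset_span ⟨b, rfl⟩)))
    obtain ⟨s, hs, u, hu, hsu⟩ := Submodule.mem_sup.1 (hle2 ht)
    -- every element of span (H' '' A) vanishes at the K-coordinates
    have hsK : ∀ x ∈ Submodule.span F (H' '' A), ∀ a, x (K a) = 0 := by
      intro x hx
      have : Submodule.span F (H' '' A) ≤
          ⨅ a, LinearMap.ker (LinearMap.proj (R := F) (φ := fun _ : Fin (d+1) => F) (K a)) := by
        apply Submodule.span_le.2
        rintro _ ⟨i, hi, rfl⟩
        rw [SetLike.mem_coe, Submodule.mem_iInf]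
        intro a
        rw [LinearMap.mem_ker, LinearMap.proj_apply]
        exact hH'K i a
      intro a
      have h5 := this hx
      rw [Submodule.mem_iInf] at h5
      exact h5 a
    -- the W-part vanishes at the K coordinates hence is zero
    obtain ⟨g, hg⟩ := (Finsupp.mem_span_range_iff_exists_finsupp.1 (by rwa [hW] at hu))
    have huK : ∀ a, u (K a) = 0 := by
      intro a
      have h1 := congrFun hsu (K a)
      simp only [Pi.add_apply] at h1
      rw [hsK s hs a, zero_add, htK a] at h1
      exact h1
    have hgU : ∀ a, (Matrix.vecMul (fun b => g b) U) a = 0 := by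
      intro a
      have h2 : (g.sum fun b c => c • v b) (K a) = u (K a) := congrFun hg (K a)
      rw [huK a] at h2
      rw [Finsupp.sum_fintype _ _ (by intro b; simp)] at h2
      simpa [Matrix.vecMul, dotProduct, hU, hv, Finset.sum_apply,
        mul_comm] using h2
    have hg0 : ∀ b, g b = 0 := by
      have hz : Matrix.vecMul (fun b => g b) U = 0 := funext hgU
      have : Matrix.vecMul (Matrix.vecMul (fun b => g b) U) U⁻¹ = 0 := by
        rw [hz]; simp [Matrix.vecMul]
      rw [Matrix.vecMul_vecMul, hUU, Matrix.vecMul_one] at this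
      exact fun b => congrFun this b
    have hu0 : u = 0 := by
      rw [← hg]
      rw [Finsupp.sum_fintype _ _ (by intro b; simp)]
      exact Finset.sum_eq_zero fun b _ => by rw [hg0 b, zero_smul]
    rw [← hsu, hu0, add_zero]
    exact hs
end
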